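/- On a nearly cosymplectic manifold, for all tangent vectors X and Y: |(∇_X θ)(Y)|² + g(Y, ∇_X ξ)² = -R(X, Y, X, Y) + R(X, Y, θX, θY). -/

import Mathlib

/-- Abstract algebraic model of a nearly cosymplectic (almost contact metric)
manifold: `A` plays the role of the algebra of smooth functions, `V` of the
module of vector fields, `D` of the directional derivative, `g` of the metric,
`nabla` of the Levi-Civita connection, `θ` of the structure tensor and `ξ` of
the characteristic (Reeb) unit vector field, with `η X = g X ξ`. -/
structure NearlyCosymplectic where
  A : Type
  V : Type
  [ringA : CommRing A]
  [algA : Algebra ℝ A]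
  [grpV : AddCommGroup V]
  [modV : Module A V]
  /-- directional derivative of functions along a vector field -/
  D : V → A → A
  D_addl : ∀ X Y f, D (X + Y) f = D X f + D Y f
  D_smull : ∀ (f : A) (X : V) (h : A), D (f • X) h = f * D X h
  D_addr : ∀ (X : V) (f h : A), D X (f + h) = D X f + D X h
  D_mul : ∀ (X : V) (f h : A), D X (f * h) = D X f * h + f * D X h
  /-- Lie bracket of vector fields -/
  bracket : V → V → V
  bracket_D : ∀ X Y f, D (bracket X Y) f = D X (D Y f) - D Y (D X f)
  /-- the Riemannian metric -/
  g : V → V → A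
  g_symm : ∀ X Y, g X Y = g Y X
  g_addl : ∀ X Y Z, g (X + Y) Z = g X Z + g Y Z
  g_smull : ∀ (f : A) X Y, g (f • X) Y = f * g X Y
  /-- the Levi-Civita connection -/
  nabla : V → V → V
  nabla_addl : ∀ X Y Z, nabla (X + Y) Z = nabla X Z + nabla Y Z
  nabla_smull : ∀ (f : A) X Y, nabla (f • X) Y = f • nabla X Y
  nabla_addr : ∀ X Y Z, nabla X (Y + Z) = nabla X Y + nabla X Z
  nabla_leibniz : ∀ (X : V) (f : A) (Y : V),
    nabla X (f • Y) = D X f • Y + f • nabla X Y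
  metric_compat : ∀ X Y Z, D X (g Y Z) = g (nabla X Y) Z + g Y (nabla X Z)
  torsion_free : ∀ X Y, nabla X Y - nabla Y X = bracket X Y
  /-- the structure (1,1)-tensor θ -/
  θ : V → V
  θ_add : ∀ X Y, θ (X + Y) = θ X + θ Y
  θ_smul : ∀ (f : A) X, θ (f • X) = f • θ X
  /-- the characteristic vector field ξ -/
  ξ : V
  /-- ξ is a unit vector field (and η(ξ)=1, with η X = g X ξ) -/
  ξ_unit : g ξ ξ = 1
  /-- θ² = -Id + η ⊗ ξ -/
  θ_sq : ∀ X, θ (θ X) = -X + g X ξ • ξ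
  /-- metric compatibility of the almost contact structure -/
  θ_compat : ∀ X Y, g (θ X) (θ Y) = g X Y - g X ξ * g Y ξ
  /-- the nearly cosymplectic condition (∇_X θ)(Y) + (∇_Y θ)(X) = 0 -/
  nearly : ∀ X Y,
    (nabla X (θ Y) - θ (nabla X Y)) + (nabla Y (θ X) - θ (nabla Y X)) = 0

attribute [instance] NearlyCosymplectic.ringA NearlyCosymplectic.algA
  NearlyCosymplectic.grpV NearlyCosymplectic.modV

namespace NearlyCosymplectic

variable (M : NearlyCosymplectic)

/-- the covariant derivative (∇_X θ)(Y) -/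
def nablaθ (X Y : M.V) : M.V := M.nabla X (M.θ Y) - M.θ (M.nabla X Y)

/-- the Riemann curvature operator R(X,Y)Z = [∇_X,∇_Y]Z - ∇_{[X,Y]}Z -/
def R (X Y Z : M.V) : M.V :=
  M.nabla X (M.nabla Y Z) - M.nabla Y (M.nabla X Z) - M.nabla (M.bracket X Y) Z

/-- the second covariant derivative (∇²_{X,Y} θ)(Z) -/
def nabla2θ (X Y Z : M.V) : M.V :=
  M.nabla X (M.nablaθ Y Z) - M.nablaθ (M.nabla X Y) Z - M.nablaθ Y (M.nabla X Z)

end NearlyCosymplectic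

open NearlyCosymplectic


/-! Differentiating the compatibility `g(θB, θC) = g(B, C) - η(B) η(C)` once, and using that
`∇θ` is skew, shows that `∇ξ` is skew-adjoint (`ξ` is Killing); hence `∇²ξ` is skew-adjoint too,
and `R(X,Y)ξ = (∇²_{X,Y} - ∇²_{Y,X}) ξ`. Differentiating the compatibility twice expresses
`g(∇²_{X,Y}θ X, θY)` through `|(∇_X θ)Y|²`, `g(Y, ∇_X ξ)²` and `∇²ξ`. The Ricci identity
`R(X,Y)θ - θR(X,Y) = ∇²_{X,Y}θ - ∇²_{Y,X}θ`, with `∇²_{Y,X}θ X = 0`, turns `R(X,Y,θX,θY)`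
into `R(X,Y,X,Y)` plus exactly these terms. -/

theorem eq_zero_of_add_self_eq_zero {R V : Type*} [Semiring R] [AddCommMonoid V] [Module R V]
    (h2 : IsUnit (2 : R)) {v : V} (h : v + v = 0) : v = 0 := by
  rwa [← two_smul R v, h2.smul_eq_zero] at h

namespace NearlyCosymplectic

variable {M : NearlyCosymplectic}

theorem isUnit_two (M : NearlyCosymplectic) : IsUnit (2 : M.A) := by
  have h := (isUnit_iff_ne_zero.2 two_ne_zero : IsUnit (2 : ℝ)).map (algebraMap ℝ M.A)
  rwa [map_ofNat] at h

theorem g_add_right (X Y Z : M.V) : M.g X (Y + Z) = M.g X Y + M.g X Z := by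
  rw [M.g_symm, M.g_addl, M.g_symm Y, M.g_symm Z]

theorem g_neg_left (X Y : M.V) : M.g (-X) Y = -M.g X Y :=
  (AddMonoidHom.mk' (M.g · Y) (M.g_addl · · Y)).map_neg X

theorem g_neg_right (X Y : M.V) : M.g X (-Y) = -M.g X Y :=
  (AddMonoidHom.mk' (M.g X) (g_add_right X)).map_neg Y

theorem g_sub_left (X Y Z : M.V) : M.g (X - Y) Z = M.g X Z - M.g Y Z :=
  (AddMonoidHom.mk' (M.g · Z) (M.g_addl · · Z)).map_sub X Y

theorem g_sub_right (X Y Z : M.V) : M.g X (Y - Z) = M.g X Y - M.g X Z :=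
  (AddMonoidHom.mk' (M.g X) (g_add_right X)).map_sub Y Z

theorem g_zero_left (Y : M.V) : M.g 0 Y = 0 :=
  (AddMonoidHom.mk' (M.g · Y) (M.g_addl · · Y)).map_zero

theorem g_zero_right (X : M.V) : M.g X 0 = 0 :=
  (AddMonoidHom.mk' (M.g X) (g_add_right X)).map_zero

theorem D_zero (X : M.V) : M.D X 0 = 0 :=
  (AddMonoidHom.mk' (M.D X) (M.D_addr X)).map_zero

theorem D_neg (X : M.V) (f : M.A) : M.D X (-f) = -M.D X f :=
  (AddMonoidHom.mk' (M.D X) (M.D_addr X)).map_neg f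

theorem D_sub (X : M.V) (f h : M.A) : M.D X (f - h) = M.D X f - M.D X h :=
  (AddMonoidHom.mk' (M.D X) (M.D_addr X)).map_sub f h

theorem D_one (X : M.V) : M.D X 1 = 0 := by
  have h := M.D_mul X 1 1
  simp only [mul_one, one_mul] at h
  linear_combination -h

theorem nabla_zero_right (X : M.V) : M.nabla X 0 = 0 :=
  (AddMonoidHom.mk' (M.nabla X) (M.nabla_addr X)).map_zero

theorem nabla_sub_left (X Y Z : M.V) : M.nabla (X - Y) Z = M.nabla X Z - M.nabla Y Z :=
  (AddMonoidHom.mk' (M.nabla · Z) (M.nabla_addl · · Z)).map_sub X Y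

theorem nabla_sub_right (X Y Z : M.V) : M.nabla X (Y - Z) = M.nabla X Y - M.nabla X Z :=
  (AddMonoidHom.mk' (M.nabla X) (M.nabla_addr X)).map_sub Y Z

theorem θ_sub (X Y : M.V) : M.θ (X - Y) = M.θ X - M.θ Y :=
  (AddMonoidHom.mk' M.θ M.θ_add).map_sub X Y

theorem nabla_θ (X Y : M.V) : M.nabla X (M.θ Y) = M.nablaθ X Y + M.θ (M.nabla X Y) := by
  rw [nablaθ, sub_add_cancel]

theorem g_R_add_g_R (X Y Z W : M.V) : M.g (M.R X Y Z) W + M.g Z (M.R X Y W) = 0 := by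
  have hXY : M.D X (M.D Y (M.g Z W))
      = M.g (M.nabla X (M.nabla Y Z)) W + M.g (M.nabla Y Z) (M.nabla X W)
        + M.g (M.nabla X Z) (M.nabla Y W) + M.g Z (M.nabla X (M.nabla Y W)) := by
    rw [M.metric_compat Y Z W, M.D_addr, M.metric_compat X, M.metric_compat X]; ring
  have hYX : M.D Y (M.D X (M.g Z W))
      = M.g (M.nabla Y (M.nabla X Z)) W + M.g (M.nabla X Z) (M.nabla Y W)
        + M.g (M.nabla Y Z) (M.nabla X W) + M.g Z (M.nabla Y (M.nabla X W)) := by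
    rw [M.metric_compat X Z W, M.D_addr, M.metric_compat Y, M.metric_compat Y]; ring
  simp only [R, g_sub_left, g_sub_right]
  linear_combination -hXY + hYX - M.bracket_D X Y (M.g Z W) + M.metric_compat (M.bracket X Y) Z W

theorem nablaθ_swap (X Y : M.V) : M.nablaθ X Y = -M.nablaθ Y X :=
  eq_neg_of_add_eq_zero_left (M.nearly X Y)

theorem nablaθ_self (X : M.V) : M.nablaθ X X = 0 :=
  eq_zero_of_add_self_eq_zero M.isUnit_two (M.nearly X X)

theorem nabla2θ_self (X Y : M.V) : M.nabla2θ X Y Y = 0 := by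
  rw [nabla2θ, nablaθ_self, nabla_zero_right, nablaθ_swap (M.nabla X Y)]
  abel

theorem R_θ_sub_θ_R (X Y Z : M.V) :
    M.R X Y (M.θ Z) - M.θ (M.R X Y Z) = M.nabla2θ X Y Z - M.nabla2θ Y X Z := by
  simp only [R, nabla2θ, nablaθ, ← M.torsion_free, nabla_sub_left, nabla_sub_right, θ_sub]
  abel

theorem g_nablaθ_θ_add_g_θ_nablaθ (A B C : M.V) :
    M.g (M.nablaθ A B) (M.θ C) + M.g (M.θ B) (M.nablaθ A C)
      = -(M.g B (M.nabla A M.ξ) * M.g C M.ξ) - M.g B M.ξ * M.g C (M.nabla A M.ξ) := by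
  have hθ := congrArg (M.D A) (M.θ_compat B C)
  rw [D_sub, M.D_mul] at hθ
  have hθθ := M.metric_compat A (M.θ B) (M.θ C)
  rw [nabla_θ, nabla_θ, M.g_addl, g_add_right, M.θ_compat (M.nabla A B) C,
    M.θ_compat B (M.nabla A C)] at hθθ
  linear_combination hθ - hθθ + M.metric_compat A B C - M.g C M.ξ * M.metric_compat A B M.ξ
    - M.g B M.ξ * M.metric_compat A C M.ξ

theorem g_nabla_ξ_ξ (A : M.V) : M.g (M.nabla A M.ξ) M.ξ = 0 := by
  have h := M.metric_compat A M.ξ M.ξ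
  rw [M.ξ_unit, D_one, M.g_symm M.ξ] at h
  exact eq_zero_of_add_self_eq_zero M.isUnit_two h.symm

theorem g_nabla_ξ_add_swap (A B : M.V) :
    M.g B (M.nabla A M.ξ) + M.g A (M.nabla B M.ξ)
      = -(M.g A (M.nabla M.ξ M.ξ) * M.g B M.ξ) - M.g A M.ξ * M.g B (M.nabla M.ξ M.ξ) := by
  have hξ (A B : M.V) : M.g B (M.nabla A M.ξ)
      = -M.g (M.nablaθ A B) (M.θ M.ξ) - M.g (M.θ B) (M.nablaθ A M.ξ) := by
    have h := g_nablaθ_θ_add_g_θ_nablaθ A B M.ξ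
    rw [M.ξ_unit, M.g_symm M.ξ (M.nabla A M.ξ), g_nabla_ξ_ξ] at h
    linear_combination h
  have hAB := hξ A B
  have hBA := hξ B A
  have hξAB := g_nablaθ_θ_add_g_θ_nablaθ M.ξ A B
  rw [nablaθ_swap A M.ξ, g_neg_right] at hAB
  rw [nablaθ_swap B A, nablaθ_swap B M.ξ, g_neg_left, g_neg_right] at hBA
  rw [M.g_symm (M.nablaθ M.ξ A) (M.θ B)] at hξAB
  linear_combination hAB + hBA + hξAB

theorem g_nabla_ξ_ξ_right (A : M.V) : M.g A (M.nabla M.ξ M.ξ) = 0 := by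
  have h := g_nabla_ξ_add_swap A M.ξ
  rw [M.ξ_unit, M.g_symm M.ξ (M.nabla A M.ξ), g_nabla_ξ_ξ, M.g_symm M.ξ (M.nabla M.ξ M.ξ),
    g_nabla_ξ_ξ] at h
  exact eq_zero_of_add_self_eq_zero M.isUnit_two (by linear_combination h)

theorem g_nabla_ξ_swap (A B : M.V) : M.g B (M.nabla A M.ξ) = -M.g A (M.nabla B M.ξ) := by
  have h := g_nabla_ξ_add_swap A B
  rw [g_nabla_ξ_ξ_right, g_nabla_ξ_ξ_right] at h
  linear_combination h

theorem g_nabla_ξ_self (A : M.V) : M.g A (M.nabla A M.ξ) = 0 :=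
  eq_zero_of_add_self_eq_zero M.isUnit_two (by linear_combination g_nabla_ξ_swap A A)

def nabla2ξ (C A : M.V) : M.V :=
  M.nabla C (M.nabla A M.ξ) - M.nabla (M.nabla C A) M.ξ

theorem g_nabla2ξ_self (C A : M.V) : M.g A (nabla2ξ C A) = 0 := by
  have h := congrArg (M.D C) (show M.g A (M.nabla A M.ξ) + M.g A (M.nabla A M.ξ) = 0 by
    rw [g_nabla_ξ_self, add_zero])
  rw [M.D_addr, D_zero, M.metric_compat] at h
  refine eq_zero_of_add_self_eq_zero M.isUnit_two ?_
  rw [nabla2ξ, g_sub_right]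
  linear_combination h - 2 * g_nabla_ξ_swap A (M.nabla C A)

theorem R_ξ (X Y : M.V) : M.R X Y M.ξ = nabla2ξ X Y - nabla2ξ Y X := by
  simp only [R, nabla2ξ, ← M.torsion_free, nabla_sub_left]
  abel

theorem g_nabla2θ_θ_add_g_θ_nabla2θ (X Y Z W : M.V) :
    M.g (M.nabla2θ X Y Z) (M.θ W) + M.g (M.θ Z) (M.nabla2θ X Y W)
      + M.g (M.nablaθ Y Z) (M.nablaθ X W) + M.g (M.nablaθ X Z) (M.nablaθ Y W)
    = -(M.g Z (nabla2ξ X Y) * M.g W M.ξ) - M.g Z M.ξ * M.g W (nabla2ξ X Y)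
      - M.g Z (M.nabla X M.ξ) * M.g W (M.nabla Y M.ξ)
      - M.g Z (M.nabla Y M.ξ) * M.g W (M.nabla X M.ξ) := by
  have h := congrArg (M.D X) (g_nablaθ_θ_add_g_θ_nablaθ Y Z W)
  rw [M.D_addr, D_sub, D_neg] at h
  simp only [M.D_mul, M.metric_compat] at h
  have nabla_nablaθ (Z : M.V) : M.nabla X (M.nablaθ Y Z)
      = M.nabla2θ X Y Z + M.nablaθ (M.nabla X Y) Z + M.nablaθ Y (M.nabla X Z) := by
    rw [nabla2θ]; abel
  have nabla_nabla_ξ : M.nabla X (M.nabla Y M.ξ) = nabla2ξ X Y + M.nabla (M.nabla X Y) M.ξ := by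
    rw [nabla2ξ, sub_add_cancel]
  rw [nabla_nablaθ, nabla_nablaθ, nabla_θ, nabla_θ, nabla_nabla_ξ] at h
  simp only [M.g_addl, g_add_right] at h
  linear_combination h - g_nablaθ_θ_add_g_θ_nablaθ (M.nabla X Y) Z W
    - g_nablaθ_θ_add_g_θ_nablaθ Y (M.nabla X Z) W - g_nablaθ_θ_add_g_θ_nablaθ Y Z (M.nabla X W)

end NearlyCosymplectic

/-- |(∇_X θ)(Y)|² + g(Y,∇_X ξ)² = -R(X,Y,X,Y) + R(X,Y,θX,θY). -/
theorem stmt8 (M : NearlyCosymplectic) (X Y : M.V) :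
    M.g (M.nablaθ X Y) (M.nablaθ X Y) + (M.g Y (M.nabla X M.ξ)) ^ 2 =
      -(M.g (M.R X Y X) Y) + M.g (M.R X Y (M.θ X)) (M.θ Y) := by
  have ricci : M.R X Y (M.θ X) = M.θ (M.R X Y X) + M.nabla2θ X Y X := by
    rw [← sub_eq_iff_eq_add', R_θ_sub_θ_R, nabla2θ_self, sub_zero]
  have hR : M.g (M.R X Y X) M.ξ = -M.g X (nabla2ξ X Y) := by
    have h := g_R_add_g_R X Y X M.ξ
    rw [R_ξ, g_sub_right, g_nabla2ξ_self Y X] at h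
    linear_combination h
  have h2 := g_nabla2θ_θ_add_g_θ_nabla2θ X Y X Y
  rw [nabla2θ_self, nablaθ_self, g_zero_right, g_zero_left, nablaθ_swap Y X, g_neg_left,
    g_nabla2ξ_self, g_nabla_ξ_self, g_nabla_ξ_swap Y X] at h2
  rw [ricci, M.g_addl, M.θ_compat, hR]
  linear_combination -h2
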